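/- arXiv:1904.09083 — 4 statements merged into one kernel-verified Lean document; each statement's English description precedes it below -/
import Mathlib

section
/- Let $C_0>0$, $C_1\ge 0$, $p>1$, $q>1$ and $t_0\ge 2$. Suppose $\Phi\colon [t_0,\infty)\to\mathbb{R}$ is differentiable and satisfies $\Phi'(t) \le \frac{-C_0}{t}|\Phi(t)|^p + \frac{C_1}{t^q}$ for all $t\ge t_0$. Then there exists a constant $C_2>0$ (depending on $C_0, C_1, p, q, t_0, \Phi(t_0)$) such that $\Phi(t) \le \frac{C_2}{(\log t)^{p^*-1}}$ for all $t\ge t_0$, where $p^*=p/(p-1)$ is the Hölder conjugate of $p$. -/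
/-!
Compare `Φ` with the barrier `B t = K (log t)^(-a)`, where `a = p* - 1 = 1 / (p - 1)`.
Since `a p = a + 1`, both `B'` and the dissipative term `-C0 B^p / t` are multiples of
`(log t)^(-(a+1)) / t`, while the forcing `C1 / t^q` is this quantity times
`(log t)^(a+1) / t^(q-1)`, which is bounded. Once `C0 K^p - a K` beats `C1` times that bound and
`Φ t0 ≤ B t0`, at any point where `Φ` touches `B` we get `Φ' < B'`, so `Φ` never crosses `B`.
-/

open Real Filter

lemma log_rpow_le_mul_rpow {x s r : ℝ} (hx : 1 ≤ x) (hs : 0 < s) (hr : 0 < r) :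
    log x ^ s ≤ (s / r) ^ s * x ^ r := by
  have hx0 : 0 ≤ x := by linarith
  have hε : 0 < r / s := div_pos hr hs
  calc log x ^ s ≤ (x ^ (r / s) / (r / s)) ^ s :=
        rpow_le_rpow (log_nonneg hx) (log_le_rpow_div hx0 hε) hs.le
    _ = (s / r) ^ s * x ^ r := by
        rw [div_rpow (rpow_nonneg hx0 _) hε.le, ← rpow_mul hx0, div_mul_cancel₀ _ hs.ne',
          div_eq_mul_inv, ← inv_rpow hε.le, inv_div, mul_comm]

lemma tendsto_mul_rpow_sub_mul_atTop {c p a : ℝ} (hc : 0 < c) (hp : 1 < p) :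
    Tendsto (fun K : ℝ => c * K ^ p - a * K) atTop atTop := by
  have h : Tendsto (fun K : ℝ => K * (c * K ^ (p - 1) - a)) atTop atTop :=
    tendsto_id.atTop_mul_atTop₀ <| tendsto_atTop_add_const_right _ _ <|
      (tendsto_rpow_atTop (by linarith)).const_mul_atTop hc
  refine h.congr' ?_
  filter_upwards [eventually_gt_atTop 0] with K hK
  rw [rpow_sub_one hK.ne']
  field_simp

lemma hasDerivAt_log_rpow {x b : ℝ} (hx : 1 < x) :
    HasDerivAt (fun t => log t ^ b) (b * log x ^ (b - 1) * x⁻¹) x :=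
  (hasDerivAt_rpow_const (Or.inl (log_pos hx).ne')).comp x (hasDerivAt_log (by positivity))

lemma forcing_lt_deriv_barrier {C0 C1 p q a K M x : ℝ} (hx : 1 < x) (hC1 : 0 ≤ C1)
    (hK0 : 0 ≤ K) (hap : a * p = a + 1) (hM : log x ^ (a + 1) ≤ M * x ^ (q - 1))
    (hK : C1 * M < C0 * K ^ p - a * K) :
    -C0 / x * (K * log x ^ (-a)) ^ p + C1 / x ^ q < K * (-a * log x ^ (-a - 1) * x⁻¹) := by
  have hL : 0 < log x := log_pos hx
  have hx0 : 0 < x := by linarith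
  set P := log x ^ (a + 1)
  set X := x ^ (q - 1) with hX
  have hP0 : 0 < P := rpow_pos_of_pos hL _
  have hX0 : 0 < X := rpow_pos_of_pos hx0 _
  have hpow : (K * log x ^ (-a)) ^ p = K ^ p * P⁻¹ := by
    rw [mul_rpow hK0 (rpow_nonneg hL.le _), ← rpow_mul hL.le, neg_mul, hap, rpow_neg hL.le]
  have hslope : log x ^ (-a - 1) = P⁻¹ := by rw [← rpow_neg hL.le, neg_add']
  have hxq : x ^ q = X * x := by rw [hX, ← rpow_add_one hx0.ne', sub_add_cancel]
  have hgap : 0 < (C0 * K ^ p - a * K) * X - C1 * P := sub_pos.2 <|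
    calc C1 * P ≤ C1 * M * X := by rw [mul_assoc]; exact mul_le_mul_of_nonneg_left hM hC1
      _ < (C0 * K ^ p - a * K) * X := mul_lt_mul_of_pos_right hK hX0
  have hdiff : K * (-a * P⁻¹ * x⁻¹) - (-C0 / x * (K ^ p * P⁻¹) + C1 / (X * x)) =
      ((C0 * K ^ p - a * K) * X - C1 * P) / (P * X * x) := by
    field_simp
    ring
  rw [hpow, hslope, hxq, ← sub_pos, hdiff]
  exact div_pos hgap (by positivity)

lemma le_div_log_rpow_of_deriv_le {C0 C1 p q a K M t0 : ℝ} {Φ Φ' : ℝ → ℝ} (ht0 : 1 < t0)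
    (hC1 : 0 ≤ C1) (hK0 : 0 ≤ K) (hap : a * p = a + 1)
    (hM : ∀ x, t0 ≤ x → log x ^ (a + 1) ≤ M * x ^ (q - 1))
    (hK : C1 * M < C0 * K ^ p - a * K)
    (hderiv : ∀ t, t0 ≤ t → HasDerivAt Φ (Φ' t) t)
    (hineq : ∀ t, t0 ≤ t → Φ' t ≤ -C0 / t * |Φ t| ^ p + C1 / t ^ q)
    (hinit : Φ t0 ≤ K / log t0 ^ a) :
    ∀ t, t0 ≤ t → Φ t ≤ K / log t ^ a := by
  have hB : ∀ t, t0 ≤ t → K / log t ^ a = K * log t ^ (-a) := fun t ht => by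
    rw [rpow_neg (log_pos (by linarith)).le, div_eq_mul_inv]
  have hBderiv : ∀ x, t0 ≤ x → HasDerivAt (fun t => K * log t ^ (-a))
      (K * (-a * log x ^ (-a - 1) * x⁻¹)) x := fun x hx =>
    (hasDerivAt_log_rpow (by linarith)).const_mul K
  intro t ht
  rw [hB t ht]
  refine image_le_of_deriv_right_lt_deriv_boundary'
    (fun x hx => (hderiv x hx.1).continuousAt.continuousWithinAt)
    (fun x hx => (hderiv x hx.1).hasDerivWithinAt) (hB t0 le_rfl ▸ hinit)
    (fun x hx => (hBderiv x hx.1).continuousAt.continuousWithinAt)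
    (fun x hx => (hBderiv x hx.1).hasDerivWithinAt) ?_ (Set.right_mem_Icc.2 ht)
  intro x hx hΦx
  have hBx : 0 ≤ K * log x ^ (-a) :=
    mul_nonneg hK0 (rpow_nonneg (log_nonneg (by linarith [hx.1])) _)
  calc Φ' x ≤ -C0 / x * |Φ x| ^ p + C1 / x ^ q := hineq x hx.1
    _ = -C0 / x * (K * log x ^ (-a)) ^ p + C1 / x ^ q := by rw [hΦx, abs_of_nonneg hBx]
    _ < K * (-a * log x ^ (-a - 1) * x⁻¹) :=
      forcing_lt_deriv_barrier (by linarith [hx.1]) hC1 hK0 hap (hM x hx.1) hK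

theorem log_decay_ode_lemma
    (C0 C1 p q t0 : ℝ) (hC0 : 0 < C0) (hC1 : 0 ≤ C1) (hp : 1 < p) (hq : 1 < q)
    (ht0 : 2 ≤ t0) (Φ Φ' : ℝ → ℝ)
    (hderiv : ∀ t, t0 ≤ t → HasDerivAt Φ (Φ' t) t)
    (hineq : ∀ t, t0 ≤ t → Φ' t ≤ -C0 / t * |Φ t| ^ p + C1 / t ^ q) :
    ∃ C2 : ℝ, 0 < C2 ∧ ∀ t, t0 ≤ t →
      Φ t ≤ C2 / (Real.log t) ^ (p / (p - 1) - 1) := by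
  have hp1 : 0 < p - 1 := by linarith
  have hap : (p / (p - 1) - 1) * p = (p / (p - 1) - 1) + 1 := by field_simp; ring
  have ha : 0 < p / (p - 1) - 1 := sub_pos.2 ((one_lt_div hp1).2 (by linarith))
  set a := p / (p - 1) - 1
  set M := ((a + 1) / (q - 1)) ^ (a + 1)
  have hM : ∀ x, t0 ≤ x → log x ^ (a + 1) ≤ M * x ^ (q - 1) := fun x hx =>
    log_rpow_le_mul_rpow (by linarith) (by linarith) (by linarith)
  have hL0 : 0 < log t0 ^ a := rpow_pos_of_pos (log_pos (by linarith)) _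
  obtain ⟨K, hK, hK_ge⟩ :=
    (((tendsto_mul_rpow_sub_mul_atTop (a := a) hC0 hp).eventually_gt_atTop (C1 * M)).and
      (eventually_ge_atTop (max 1 (Φ t0 * log t0 ^ a)))).exists
  have hK_pos : 0 < K := by linarith [le_max_left 1 (Φ t0 * log t0 ^ a)]
  have hinit : Φ t0 ≤ K / log t0 ^ a :=
    (le_div_iff₀ hL0).2 ((le_max_right _ _).trans hK_ge)
  exact ⟨K, hK_pos, le_div_log_rpow_of_deriv_le (by linarith) hC1 hK_pos.le hap hM hK hderiv hineq
    hinit⟩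
end

section
/- Let $t_0\ge 0$ and let $\lambda, Q \in C([t_0,\infty))\cap L^1([t_0,\infty))$. Suppose $y\colon [t_0,\infty)\to\mathbb{R}$ is differentiable and satisfies $y'(t) = \lambda(t)y(t) + Q(t)$ for $t\ge t_0$. Define $C_3 = \exp(\int_{t_0}^\infty |\lambda(\tau)|d\tau)$ and $y^+ = y(t_0)e^{\int_{t_0}^\infty \lambda(\tau)d\tau} + \int_{t_0}^\infty Q(s)e^{\int_s^\infty \lambda(\tau)d\tau}ds$. Then for all $t\ge t_0$, $|y(t)-y^+| \le C_3 \int_t^\infty (|y^+||\lambda(\tau)| + |Q(\tau)|)\,d\tau$. In particular, $y(t)\to y^+$ as $t\to\infty$. -/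
/-!
With `M t = ∫_t^∞ λ`, the integrating factor `exp (M t)` turns the equation into the conservation
law `y t * exp (M t) + ∫_t^∞ Q s * exp (M s) ds = y⁺`, whose value at `t0` is the definition of
`y⁺`. Solving for `y t` gives `y t - y⁺ = y⁺ (exp (-M t) - 1) - ∫_t^∞ Q s * exp (M s - M t) ds`;
since `|M t|` and `M s - M t` (for `s ≥ t`) are bounded by `∫_t^∞ |λ| ≤ ∫_{t0}^∞ |λ|`, the
elementary bound `|exp x - 1| ≤ |x| exp |x|` yields the estimate, and its right-hand side is the
tail of an integrable function, hence tends to zero.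
-/

open Real MeasureTheory Set Filter Topology

theorem abs_exp_sub_one_le_abs_mul_exp_abs (x : ℝ) : |exp x - 1| ≤ |x| * exp |x| := by
  rcases le_total 0 x with hx | hx
  · rw [abs_of_nonneg hx, abs_of_nonneg (sub_nonneg.2 (one_le_exp hx))]
    have h := mul_le_mul_of_nonneg_right (one_sub_le_exp_neg x) (exp_pos x).le
    rw [exp_neg, inv_mul_cancel₀ (exp_pos x).ne'] at h
    linarith
  · rw [abs_of_nonpos hx, abs_of_nonpos (sub_nonpos.2 (exp_le_one_iff.2 hx))]
    nlinarith [add_one_le_exp x, one_le_exp (neg_nonneg.2 hx)]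

section TailIntegral

variable {E : Type*} [NormedAddCommGroup E] {g : ℝ → E} {a b x : ℝ}

theorem integral_norm_Ioi_le_of_le (hg : IntegrableOn g (Ioi a)) (hab : a ≤ b) :
    ∫ s in Ioi b, ‖g s‖ ≤ ∫ s in Ioi a, ‖g s‖ :=
  setIntegral_mono_set hg.norm (ae_of_all _ fun _ => norm_nonneg _)
    (Ioi_subset_Ioi hab).eventuallyLE

variable [NormedSpace ℝ E]

theorem hasDerivWithinAt_intervalIntegral_Ici [CompleteSpace E] (hg : ContinuousOn g (Ici a))
    (hx : a ≤ x) :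
    HasDerivWithinAt (fun u => ∫ s in a..u, g s) (g x) (Ici a) x := by
  have hint : IntervalIntegrable g volume a x :=
    (hg.mono Icc_subset_Ici_self).intervalIntegrable_of_Icc hx
  rcases hx.eq_or_lt with rfl | hlt
  · exact intervalIntegral.integral_hasDerivWithinAt_right hint
      ((hg.mono Ioi_subset_Ici_self).stronglyMeasurableAtFilter_nhdsWithin measurableSet_Ioi a)
      ((hg a self_mem_Ici).mono Ioi_subset_Ici_self)
  · exact (intervalIntegral.integral_hasDerivAt_right hint
      ((hg.mono Ioi_subset_Ici_self).stronglyMeasurableAtFilter isOpen_Ioi x hlt)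
      ((hg x hx).continuousAt (Ici_mem_nhds hlt))).hasDerivWithinAt

theorem hasDerivWithinAt_integral_Ioi [CompleteSpace E] (hgc : ContinuousOn g (Ici a))
    (hgi : IntegrableOn g (Ioi a)) (hx : a ≤ x) :
    HasDerivWithinAt (fun t => ∫ s in Ioi t, g s) (-g x) (Ici a) x := by
  have h := (hasDerivWithinAt_const x (Ici a) (∫ s in Ioi a, g s)).sub
    (hasDerivWithinAt_intervalIntegral_Ici hgc hx)
  rw [zero_sub] at h
  refine h.congr_of_mem (fun t ht => ?_) hx
  rw [Pi.sub_apply, ← intervalIntegral.integral_Ioi_sub_Ioi hgi ht, sub_sub_cancel]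

theorem norm_integral_Ioi_sub_integral_Ioi_le {c : ℝ} (hg : IntegrableOn g (Ioi a)) (hab : a ≤ b)
    (hbc : b ≤ c) : ‖(∫ s in Ioi b, g s) - ∫ s in Ioi c, g s‖ ≤ ∫ s in Ioi a, ‖g s‖ := by
  rw [intervalIntegral.integral_Ioi_sub_Ioi (hg.mono_set (Ioi_subset_Ioi hab)) hbc,
    intervalIntegral.integral_of_le hbc]
  exact (norm_integral_le_integral_norm _).trans (setIntegral_mono_set hg.norm
    (ae_of_all _ fun _ => norm_nonneg _)
    (show Ioc b c ⊆ Ioi a from fun s hs => hab.trans_lt hs.1).eventuallyLE)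

theorem tendsto_integral_Ioi_atTop (hg : IntegrableOn g (Ioi a)) :
    Tendsto (fun t => ∫ s in Ioi t, g s) atTop (𝓝 0) := by
  have hempty : ⋂ t : ℝ, Ioi t = ∅ :=
    eq_empty_of_forall_notMem fun s hs => lt_irrefl s (mem_iInter.1 hs s)
  simpa [hempty] using tendsto_setIntegral_of_antitone (fun _ => measurableSet_Ioi)
    (fun _ _ h => Ioi_subset_Ioi h) ⟨a, hg⟩

end TailIntegral

noncomputable def scatteringState (lam Q : ℝ → ℝ) (t0 y0 : ℝ) : ℝ :=
  y0 * exp (∫ τ in Ioi t0, lam τ) + ∫ s in Ioi t0, Q s * exp (∫ τ in Ioi s, lam τ)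

section LinearODE

variable {lam Q y : ℝ → ℝ} {t0 t : ℝ}

theorem abs_integral_Ioi_le_of_le (hlam : IntegrableOn lam (Ioi t0)) (ht : t0 ≤ t) :
    |∫ τ in Ioi t, lam τ| ≤ ∫ τ in Ioi t0, |lam τ| := by
  simpa only [Real.norm_eq_abs] using
    (norm_integral_le_integral_norm _).trans (integral_norm_Ioi_le_of_le hlam ht)

theorem integrableOn_mul_exp_integral_Ioi (hlamC : ContinuousOn lam (Ici t0))
    (hlamI : IntegrableOn lam (Ioi t0)) (hQI : IntegrableOn Q (Ioi t0)) :
    IntegrableOn (fun s => Q s * exp (∫ τ in Ioi s, lam τ)) (Ioi t0) := by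
  have hM : ContinuousOn (fun s => ∫ τ in Ioi s, lam τ) (Ioi t0) := fun x hx =>
    ((hasDerivWithinAt_integral_Ioi hlamC hlamI (le_of_lt hx)).continuousWithinAt).mono
      Ioi_subset_Ici_self
  refine hQI.mul_bdd ((continuous_exp.comp_continuousOn hM).aestronglyMeasurable
    measurableSet_Ioi) (c := exp (∫ τ in Ioi t0, |lam τ|)) ?_
  refine (ae_restrict_iff' measurableSet_Ioi).2 (ae_of_all _ fun s hs => ?_)
  rw [norm_eq_abs, abs_exp, exp_le_exp]
  exact (le_abs_self _).trans (abs_integral_Ioi_le_of_le hlamI (le_of_lt hs))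

theorem mul_exp_integral_Ioi_add_integral_Ioi_eq (hlamC : ContinuousOn lam (Ici t0))
    (hQC : ContinuousOn Q (Ici t0)) (hlamI : IntegrableOn lam (Ioi t0))
    (hQI : IntegrableOn Q (Ioi t0))
    (hode : ∀ t, t0 ≤ t → HasDerivAt y (lam t * y t + Q t) t) (ht : t0 ≤ t) :
    y t * exp (∫ τ in Ioi t, lam τ) + ∫ s in Ioi t, Q s * exp (∫ τ in Ioi s, lam τ) =
      scatteringState lam Q t0 (y t0) := by
  have hM : ∀ x, t0 ≤ x → HasDerivWithinAt (fun s => ∫ τ in Ioi s, lam τ) (-lam x) (Ici t0) x :=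
    fun x hx => hasDerivWithinAt_integral_Ioi hlamC hlamI hx
  have hQeM : ContinuousOn (fun s => Q s * exp (∫ τ in Ioi s, lam τ)) (Ici t0) :=
    hQC.mul (continuous_exp.comp_continuousOn fun x hx => (hM x hx).continuousWithinAt)
  have hF : ∀ x, t0 ≤ x → HasDerivWithinAt (fun u => y u * exp (∫ τ in Ioi u, lam τ) +
      ∫ s in Ioi u, Q s * exp (∫ τ in Ioi s, lam τ)) 0 (Ici t0) x := fun x hx => by
    refine (((hode x hx).hasDerivWithinAt.mul (hM x hx).exp).add (hasDerivWithinAt_integral_Ioi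
      hQeM (integrableOn_mul_exp_integral_Ioi hlamC hlamI hQI) hx)).congr_deriv ?_
    ring
  exact constant_of_has_deriv_right_zero
    (fun x hx => (hF x hx.1).continuousWithinAt.mono Icc_subset_Ici_self)
    (fun x hx => (hF x hx.1).mono (Ici_subset_Ici.2 hx.1)) t ⟨ht, le_rfl⟩

theorem abs_integral_Ioi_mul_exp_sub_le (hlamI : IntegrableOn lam (Ioi t0))
    (hQI : IntegrableOn Q (Ioi t0)) (ht : t0 ≤ t) :
    |∫ s in Ioi t, Q s * exp ((∫ τ in Ioi s, lam τ) - ∫ τ in Ioi t, lam τ)| ≤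
      exp (∫ τ in Ioi t0, |lam τ|) * ∫ s in Ioi t, |Q s| := by
  rw [← Real.norm_eq_abs, ← integral_const_mul]
  refine norm_integral_le_of_norm_le ((hQI.mono_set (Ioi_subset_Ioi ht)).abs.const_mul _) ?_
  refine (ae_restrict_iff' measurableSet_Ioi).2 (ae_of_all _ fun s hs => ?_)
  rw [norm_mul, norm_eq_abs, norm_eq_abs, abs_exp, mul_comm]
  gcongr
  have h := norm_integral_Ioi_sub_integral_Ioi_le hlamI ht hs.le
  rw [Real.norm_eq_abs, abs_sub_comm] at h
  simp only [Real.norm_eq_abs] at h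
  exact (le_abs_self _).trans h

theorem abs_sub_scatteringState_le (hlamC : ContinuousOn lam (Ici t0))
    (hQC : ContinuousOn Q (Ici t0)) (hlamI : IntegrableOn lam (Ioi t0))
    (hQI : IntegrableOn Q (Ioi t0))
    (hode : ∀ t, t0 ≤ t → HasDerivAt y (lam t * y t + Q t) t) (ht : t0 ≤ t) :
    |y t - scatteringState lam Q t0 (y t0)| ≤ exp (∫ τ in Ioi t0, |lam τ|) *
      ∫ τ in Ioi t, (|scatteringState lam Q t0 (y t0)| * |lam τ| + |Q τ|) := by
  have hcons := mul_exp_integral_Ioi_add_integral_Ioi_eq hlamC hQC hlamI hQI hode ht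
  set yp := scatteringState lam Q t0 (y t0)
  set M := fun s => ∫ τ in Ioi s, lam τ
  set A := ∫ τ in Ioi t0, |lam τ|
  have hsplit : y t - yp = yp * (exp (-M t) - 1) - ∫ s in Ioi t, Q s * exp (M s - M t) := by
    simp_rw [exp_sub, ← mul_div_assoc, integral_div, exp_neg]
    rw [← hcons]
    field_simp
    ring
  have hL : |M t| ≤ ∫ τ in Ioi t, |lam τ| := by
    simpa only [Real.norm_eq_abs] using
      norm_integral_le_integral_norm (μ := volume.restrict (Ioi t)) lam
  have hLA : ∫ τ in Ioi t, |lam τ| ≤ A := by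
    simpa only [Real.norm_eq_abs] using integral_norm_Ioi_le_of_le hlamI ht
  have hexp : |exp (-M t) - 1| ≤ (∫ τ in Ioi t, |lam τ|) * exp A := by
    refine (abs_exp_sub_one_le_abs_mul_exp_abs _).trans ?_
    rw [abs_neg]
    gcongr
    exact hL.trans hLA
  have hforce := abs_integral_Ioi_mul_exp_sub_le hlamI hQI ht
  have hlamI' := (hlamI.mono_set (Ioi_subset_Ioi ht)).abs
  have hQI' := (hQI.mono_set (Ioi_subset_Ioi ht)).abs
  calc |y t - yp| ≤ |yp| * |exp (-M t) - 1| + |∫ s in Ioi t, Q s * exp (M s - M t)| := by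
        rw [hsplit, ← abs_mul]; exact abs_sub _ _
    _ ≤ |yp| * ((∫ τ in Ioi t, |lam τ|) * exp A) + exp A * ∫ s in Ioi t, |Q s| := by gcongr
    _ = exp A * ∫ τ in Ioi t, (|yp| * |lam τ| + |Q τ|) := by
        rw [integral_add (hlamI'.const_mul _) hQI', integral_const_mul]; ring

end LinearODE

theorem linear_ode_scattering_general
    (t0 : ℝ) (lam Q y : ℝ → ℝ)
    (hlamC : ContinuousOn lam (Ici t0)) (hQC : ContinuousOn Q (Ici t0))
    (hlamI : IntegrableOn lam (Ici t0)) (hQI : IntegrableOn Q (Ici t0))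
    (hode : ∀ t, t0 ≤ t → HasDerivAt y (lam t * y t + Q t) t) :
    (∀ t, t0 ≤ t →
      |y t - (y t0 * Real.exp (∫ τ in Ioi t0, lam τ)
          + ∫ s in Ioi t0, Q s * Real.exp (∫ τ in Ioi s, lam τ))|
        ≤ Real.exp (∫ τ in Ioi t0, |lam τ|)
            * ∫ τ in Ioi t, (|y t0 * Real.exp (∫ τ' in Ioi t0, lam τ')
                + ∫ s in Ioi t0, Q s * Real.exp (∫ τ' in Ioi s, lam τ')| * |lam τ| + |Q τ|)) ∧
    Filter.Tendsto y Filter.atTop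
      (nhds (y t0 * Real.exp (∫ τ in Ioi t0, lam τ)
          + ∫ s in Ioi t0, Q s * Real.exp (∫ τ in Ioi s, lam τ))) := by
  have hlamI' := hlamI.mono_set Ioi_subset_Ici_self
  have hQI' := hQI.mono_set Ioi_subset_Ici_self
  have hbound := fun t (ht : t0 ≤ t) => abs_sub_scatteringState_le hlamC hQC hlamI' hQI' hode ht
  refine ⟨hbound, tendsto_iff_norm_sub_tendsto_zero.2 ?_⟩
  have htail := (tendsto_integral_Ioi_atTop ((hlamI'.abs.const_mul
    |scatteringState lam Q t0 (y t0)|).add hQI'.abs)).const_mul (exp (∫ τ in Ioi t0, |lam τ|))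
  rw [mul_zero] at htail
  exact squeeze_zero' (Eventually.of_forall fun _ => norm_nonneg _)
    ((eventually_ge_atTop t0).mono hbound) htail

theorem linear_ode_scattering
    (t0 : ℝ) (ht0 : 0 ≤ t0) (lam Q y : ℝ → ℝ)
    (hlamC : ContinuousOn lam (Ici t0)) (hQC : ContinuousOn Q (Ici t0))
    (hlamI : IntegrableOn lam (Ici t0)) (hQI : IntegrableOn Q (Ici t0))
    (hode : ∀ t, t0 ≤ t → HasDerivAt y (lam t * y t + Q t) t) :
    (∀ t, t0 ≤ t →
      |y t - (y t0 * Real.exp (∫ τ in Ioi t0, lam τ)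
          + ∫ s in Ioi t0, Q s * Real.exp (∫ τ in Ioi s, lam τ))|
        ≤ Real.exp (∫ τ in Ioi t0, |lam τ|)
            * ∫ τ in Ioi t, (|y t0 * Real.exp (∫ τ' in Ioi t0, lam τ')
                + ∫ s in Ioi t0, Q s * Real.exp (∫ τ' in Ioi s, lam τ')| * |lam τ| + |Q τ|)) ∧
    Filter.Tendsto y Filter.atTop
      (nhds (y t0 * Real.exp (∫ τ in Ioi t0, lam τ)
          + ∫ s in Ioi t0, Q s * Real.exp (∫ τ in Ioi s, lam τ))) :=
  linear_ode_scattering_general t0 lam Q y hlamC hQC hlamI hQI hode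
end

section
/- Let $t_0 \ge 2$, $C_1 \ge 0$, $0 < \mu < 1/10$, and suppose $\Phi\colon[t_0,\infty)\to[0,\infty)$ is differentiable with $\Phi'(t) \le \frac{-1}{t}\Phi(t)^2 + C_1 t^{2\mu-3/2}$ for $t\ge t_0$. Then $\Phi(t) \le \frac{C}{\sqrt{\log t}}$ for all $t\ge t_0$, for some constant $C$ depending on $t_0$, $\Phi(t_0)$, $C_1$ and $\mu$; in particular $\Phi(t)\to 0$ as $t\to\infty$. -/
/-!
With α = 1/2 - 2μ the forcing term is C₁ t^(-1-α) ≤ (C₁/α) / (t log t), because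
log t ≤ t^α / α. Hence for A ≥ C₁/α + 2 and log t ≥ 1/4 the barrier B(t) = A / √(log t) is a
strict supersolution: the damping -B²/t = -A²/(t log t) beats both the forcing term and
B' = -A / (2 t (log t)^(3/2)). Taking also A ≥ Φ(t₀) √(log t₀), the solution starts below B and
can never cross it.
-/

open Real Filter Topology

theorem le_of_hasDerivAt_lt_barrier {f f' B B' : ℝ → ℝ} {a : ℝ}
    (hf : ∀ x, a ≤ x → HasDerivAt f (f' x) x) (hB : ∀ x, a ≤ x → HasDerivAt B (B' x) x)
    (ha : f a ≤ B a) (bound : ∀ x, a ≤ x → f x = B x → f' x < B' x) :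
    ∀ x, a ≤ x → f x ≤ B x := fun _ hx =>
  image_le_of_deriv_right_lt_deriv_boundary'
    (fun y hy => (hf y hy.1).continuousAt.continuousWithinAt)
    (fun y hy => (hf y hy.1).hasDerivWithinAt) ha
    (fun y hy => (hB y hy.1).continuousAt.continuousWithinAt)
    (fun y hy => (hB y hy.1).hasDerivWithinAt)
    (fun y hy => bound y hy.1) ⟨hx, le_rfl⟩

theorem hasDerivAt_const_div_sqrt_log (A : ℝ) {x : ℝ} (hx : 1 < x) :
    HasDerivAt (fun y => A / √(log y)) (-A / (2 * x * log x * √(log x))) x := by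
  have hlog : 0 < log x := log_pos hx
  have hsqrt : 0 < √(log x) := sqrt_pos.2 hlog
  have hderiv := (hasDerivAt_sqrt hlog.ne').comp x (hasDerivAt_log (by linarith))
  refine ((hasDerivAt_const x A).div hderiv hsqrt.ne').congr_deriv ?_
  rw [Function.comp_apply, sq_sqrt hlog.le]
  field_simp
  ring

theorem tendsto_const_div_sqrt_log_atTop (A : ℝ) :
    Tendsto (fun t => A / √(log t)) atTop (𝓝 0) :=
  tendsto_const_nhds.div_atTop (tendsto_sqrt_atTop.comp tendsto_log_atTop)

theorem mul_rpow_neg_one_sub_le {C α t : ℝ} (hC : 0 ≤ C) (hα : 0 < α) (ht : 1 < t) :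
    C * t ^ (-(1 + α)) ≤ C / α / (t * log t) := by
  have ht0 : 0 < t := by linarith
  have hlog : log t ≤ t ^ α / α := log_le_rpow_div ht0.le hα
  calc C * t ^ (-(1 + α)) = C / α / (t * (t ^ α / α)) := by
        rw [rpow_neg ht0.le, rpow_add ht0, rpow_one]
        field_simp
    _ ≤ C / α / (t * log t) := by
        have := log_pos ht
        gcongr

theorem barrier_strict_supersolution {A K ℓ x : ℝ} (hx : 0 < x) (hℓ : 1 / 4 ≤ ℓ) (hK : 0 ≤ K)
    (hA : K + 2 ≤ A) :
    -1 / x * (A / √ℓ) ^ 2 + K / (x * ℓ) < -A / (2 * x * ℓ * √ℓ) := by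
  obtain ⟨s, hs0, rfl⟩ : ∃ s, 0 ≤ s ∧ ℓ = s ^ 2 :=
    ⟨√ℓ, sqrt_nonneg ℓ, (sq_sqrt (by linarith)).symm⟩
  rw [sqrt_sq hs0]
  have hs : 1 / 2 ≤ s := by nlinarith
  rw [div_pow, show -1 / x * (A ^ 2 / s ^ 2) + K / (x * s ^ 2) = -(A ^ 2 - K) / (x * s ^ 2) by
    field_simp; ring, div_lt_div_iff₀ (by positivity) (by positivity)]
  have hA2 : A + 2 ≤ A ^ 2 - K := by nlinarith
  have key : A < 2 * s * (A ^ 2 - K) := by nlinarith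
  linear_combination mul_lt_mul_of_pos_left key (by positivity : 0 < x * s ^ 2)

theorem le_const_div_sqrt_log_of_deriv_le {t0 C α A : ℝ} {Φ Φ' : ℝ → ℝ}
    (ht0 : exp (1 / 4) ≤ t0) (hC : 0 ≤ C) (hα : 0 < α) (hA : C / α + 2 ≤ A)
    (hΦt0 : Φ t0 * √(log t0) ≤ A) (hderiv : ∀ t, t0 ≤ t → HasDerivAt Φ (Φ' t) t)
    (hineq : ∀ t, t0 ≤ t → Φ' t ≤ -1 / t * Φ t ^ 2 + C * t ^ (-(1 + α))) :
    ∀ t, t0 ≤ t → Φ t ≤ A / √(log t) := by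
  have one_lt : ∀ t, t0 ≤ t → 1 < t := fun t ht =>
    (one_lt_exp_iff.2 (by norm_num)).trans_le (ht0.trans ht)
  have quarter_le_log : ∀ t, t0 ≤ t → 1 / 4 ≤ log t := fun t ht =>
    (le_log_iff_exp_le (by linarith [one_lt t ht])).2 (ht0.trans ht)
  refine le_of_hasDerivAt_lt_barrier hderiv
    (fun t ht => hasDerivAt_const_div_sqrt_log A (one_lt t ht)) ?_ fun t ht hΦt => ?_
  · rwa [le_div_iff₀ (sqrt_pos.2 (by linarith [quarter_le_log t0 le_rfl]))]
  · have ht1 := one_lt t ht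
    calc Φ' t ≤ -1 / t * Φ t ^ 2 + C * t ^ (-(1 + α)) := hineq t ht
      _ ≤ -1 / t * (A / √(log t)) ^ 2 + C / α / (t * log t) := by
        rw [hΦt]
        gcongr
        exact mul_rpow_neg_one_sub_le hC hα ht1
      _ < -A / (2 * t * log t * √(log t)) :=
        barrier_strict_supersolution (by linarith) (quarter_le_log t ht) (div_nonneg hC hα.le) hA

theorem log_decay_special_case_general
    (t0 C1 μ : ℝ) (ht0 : 2 ≤ t0) (hC1 : 0 ≤ C1) (hμ' : μ < 1/10)
    (Φ Φ' : ℝ → ℝ) (hΦnn : ∀ t, t0 ≤ t → 0 ≤ Φ t)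
    (hderiv : ∀ t, t0 ≤ t → HasDerivAt Φ (Φ' t) t)
    (hineq : ∀ t, t0 ≤ t → Φ' t ≤ -1 / t * (Φ t) ^ 2 + C1 * t ^ (2*μ - 3/2)) :
    (∃ C : ℝ, ∀ t, t0 ≤ t → Φ t ≤ C / Real.sqrt (Real.log t)) ∧
    Filter.Tendsto Φ Filter.atTop (nhds 0) := by
  set α := 1 / 2 - 2 * μ
  have hα : 0 < α := show 0 < 1 / 2 - 2 * μ by linarith
  have hexp : 2 * μ - 3 / 2 = -(1 + α) := by ring
  have ht0_exp : exp (1 / 4) ≤ t0 := by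
    refine le_trans ?_ ht0
    rw [← le_log_iff_exp_le two_pos]
    linarith [log_two_gt_d9]
  have hΦt0 : 0 ≤ Φ t0 * √(log t0) := mul_nonneg (hΦnn t0 le_rfl) (sqrt_nonneg _)
  have hbound := le_const_div_sqrt_log_of_deriv_le (A := Φ t0 * √(log t0) + C1 / α + 2)
    ht0_exp hC1 hα (by linarith) (by linarith [div_nonneg hC1 hα.le]) hderiv (hexp ▸ hineq)
  refine ⟨⟨_, hbound⟩, ?_⟩
  exact tendsto_of_tendsto_of_tendsto_of_le_of_le' tendsto_const_nhds
    (tendsto_const_div_sqrt_log_atTop _)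
    ((eventually_ge_atTop t0).mono hΦnn) ((eventually_ge_atTop t0).mono hbound)

theorem log_decay_special_case
    (t0 C1 μ : ℝ) (ht0 : 2 ≤ t0) (hC1 : 0 ≤ C1) (hμ : 0 < μ) (hμ' : μ < 1/10)
    (Φ Φ' : ℝ → ℝ) (hΦnn : ∀ t, t0 ≤ t → 0 ≤ Φ t)
    (hderiv : ∀ t, t0 ≤ t → HasDerivAt Φ (Φ' t) t)
    (hineq : ∀ t, t0 ≤ t → Φ' t ≤ -1 / t * (Φ t) ^ 2 + C1 * t ^ (2*μ - 3/2)) :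
    (∃ C : ℝ, ∀ t, t0 ≤ t → Φ t ≤ C / Real.sqrt (Real.log t)) ∧
    Filter.Tendsto Φ Filter.atTop (nhds 0) :=
  log_decay_special_case_general t0 C1 μ ht0 hC1 hμ' Φ Φ' hΦnn hderiv hineq
end

section
/- Let $t_0\ge 2$, $0<\mu<1/10$, and let $V=(V_1,V_2)$ be a bounded $C^1$ solution on $[t_0,\infty)$ of $\partial_t V_1 = \frac{-1}{2t}V_1V_2^2 + K_1(t)$, $\partial_t V_2 = \frac{-1}{2t}V_1^2V_2 + K_2(t)$ with $|K_j(t)|\le At^{2\mu-3/2}$. Suppose $m := \lim_{t\to\infty}(V_1(t)^2 - V_2(t)^2) = 0$. Then both $V_1(t)\to 0$ and $V_2(t)\to 0$ as $t\to\infty$, with $|V_1(t)| \le C(\log t)^{-1/2}$. -/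
/-! The mass `V1² - V2²` has derivative `2 (V1 K1 - V2 K2) = O(t^(2μ - 3/2))`; since it tends to
zero, it is `O(t^(2μ - 1/2))`. Substituting `V2² = V1² - (V1² - V2²)` into the equation for
`u = V1²` gives the Riccati-type inequality `u' ≤ -u²/t + C t^(2μ - 3/2)`, and comparison with the
barrier `b / log t` yields `u ≤ b / log t`. Finally `V2² = u - (V1² - V2²) → 0` too. -/

open Real Set Filter Topology

theorem abs_le_of_abs_deriv_le_neg_deriv {h h' G G' : ℝ → ℝ} {t0 : ℝ}
    (hh : ∀ t ≥ t0, HasDerivAt h (h' t) t) (hG : ∀ t ≥ t0, HasDerivAt G (G' t) t)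
    (hbound : ∀ t ≥ t0, |h' t| ≤ -G' t) (hh0 : Tendsto h atTop (𝓝 0))
    (hG0 : Tendsto G atTop (𝓝 0)) {t : ℝ} (ht : t0 ≤ t) : |h t| ≤ G t := by
  have hstep : ∀ s ≥ t, |h s - h t| ≤ G t - G s := by
    intro s hs
    refine image_norm_le_of_norm_deriv_right_le_deriv_boundary' (f := fun x => h x - h t)
      (f' := h') (B := fun x => G t - G x) (B' := fun x => -G' x) (fun x hx => ?_)
      (fun x hx => ?_) (by simp) (fun x hx => ?_) (fun x hx => ?_) (fun x hx => ?_) ⟨hs, le_rfl⟩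
    · exact ((hh x (ht.trans hx.1)).sub_const _).continuousAt.continuousWithinAt
    · exact ((hh x (ht.trans hx.1)).sub_const _).hasDerivWithinAt
    · exact ((hG x (ht.trans hx.1)).const_sub _).continuousAt.continuousWithinAt
    · simpa using ((hG x (ht.trans hx.1)).const_sub (G t)).hasDerivWithinAt
    · exact hbound x (ht.trans hx.1)
  have hlim := le_of_tendsto_of_tendsto ((hh0.sub_const (h t)).abs) (tendsto_const_nhds.sub hG0)
    (eventually_ge_atTop t |>.mono hstep)
  simpa using hlim

theorem abs_le_rpow_of_abs_deriv_le {h h' : ℝ → ℝ} {t0 a q : ℝ} (ht0 : 0 < t0) (hq : q < -1)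
    (hh : ∀ t ≥ t0, HasDerivAt h (h' t) t) (hbound : ∀ t ≥ t0, |h' t| ≤ a * t ^ q)
    (hh0 : Tendsto h atTop (𝓝 0)) {t : ℝ} (ht : t0 ≤ t) :
    |h t| ≤ a / -(q + 1) * t ^ (q + 1) := by
  have hq' : q + 1 ≠ 0 := by linarith
  refine abs_le_of_abs_deriv_le_neg_deriv (G := fun s => a / -(q + 1) * s ^ (q + 1))
    (G' := fun s => -(a * s ^ q)) hh (fun s hs => ?_) (fun s hs => by simpa using hbound s hs)
    hh0 ?_ ht
  · refine ((hasDerivAt_rpow_const (p := q + 1) (Or.inl (ht0.trans_le hs).ne')).const_mul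
      (a / -(q + 1))).congr_deriv ?_
    rw [add_sub_cancel_right]
    field_simp
  · simpa using (tendsto_rpow_neg_atTop (y := -(q + 1)) (by linarith)).const_mul (a / -(q + 1))

theorem log_sq_mul_rpow_neg_le {x ε : ℝ} (hx : 1 ≤ x) (hε : 0 < ε) :
    log x ^ 2 * x ^ (-ε) ≤ 4 / ε ^ 2 := by
  have hx0 : 0 < x := by linarith
  have hlog : log x ≤ x ^ (ε / 2) / (ε / 2) := log_le_rpow_div hx0.le (by positivity)
  have hsq : (x ^ (ε / 2)) ^ 2 = x ^ ε := by
    rw [← rpow_natCast, ← rpow_mul hx0.le]; norm_num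
  calc log x ^ 2 * x ^ (-ε) ≤ (x ^ (ε / 2) / (ε / 2)) ^ 2 * x ^ (-ε) := by
        gcongr; exact log_nonneg hx
    _ = 4 / ε ^ 2 * (x ^ ε * x ^ (-ε)) := by rw [div_pow, hsq]; ring
    _ = 4 / ε ^ 2 := by rw [← rpow_add hx0, add_neg_cancel, rpow_zero, mul_one]

theorem hasDerivAt_const_div_log {b x : ℝ} (hx : 1 < x) :
    HasDerivAt (fun t => b / log t) (-b / (x * log x ^ 2)) x := by
  have hx0 : x ≠ 0 := by positivity
  refine ((hasDerivAt_const x b).div (hasDerivAt_log hx0) (log_pos hx).ne').congr_deriv ?_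
  field_simp
  ring

theorem exists_le_div_log_of_deriv_le {u u' : ℝ → ℝ} {t0 C q : ℝ} (ht0 : 1 < t0) (hq : q < -1)
    (hC : 0 ≤ C) (hu : ∀ t ≥ t0, HasDerivAt u (u' t) t)
    (hu' : ∀ t ≥ t0, u' t ≤ -u t ^ 2 / t + C * t ^ q) :
    ∃ b, ∀ t ≥ t0, u t ≤ b / log t := by
  set b := max (u t0 * log t0) (C * (4 / (q + 1) ^ 2)) + 2
  refine ⟨b, fun t ht => ?_⟩
  have hb : C * (4 / (q + 1) ^ 2) + 2 ≤ b := by simp only [b]; gcongr; exact le_max_right _ _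
  have hinit : u t0 ≤ b / log t0 := by
    rw [le_div_iff₀ (log_pos ht0)]
    linarith [le_max_left (u t0 * log t0) (C * (4 / (q + 1) ^ 2))]
  -- the barrier `b / log x` is a strict supersolution because `b ≥ 4 C / (q + 1)² + 2`
  have hcross : ∀ x ∈ Ico t0 t, u x = b / log x → u' x < -b / (x * log x ^ 2) := by
    rintro x ⟨hx, -⟩ hux
    have hx1 : 1 < x := ht0.trans_le hx
    have hx0 : 0 < x := by linarith
    have hL : 0 < log x := log_pos hx1
    have hsmall : C * x ^ q * (x * log x ^ 2) ≤ C * (4 / (q + 1) ^ 2) := by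
      have := log_sq_mul_rpow_neg_le hx1.le (ε := -(q + 1)) (by linarith)
      rw [neg_sq, neg_neg] at this
      calc C * x ^ q * (x * log x ^ 2) = C * (log x ^ 2 * x ^ (q + 1)) := by
            rw [rpow_add_one hx0.ne']; ring
        _ ≤ _ := by gcongr
    have hgap : C * x ^ q < (b ^ 2 - b) / (x * log x ^ 2) := by
      rw [lt_div_iff₀ (by positivity)]
      nlinarith
    calc u' x ≤ -u x ^ 2 / x + C * x ^ q := hu' x hx
      _ < -(b / log x) ^ 2 / x + (b ^ 2 - b) / (x * log x ^ 2) := by rw [hux]; linarith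
      _ = -b / (x * log x ^ 2) := by field_simp; ring
  exact image_le_of_deriv_right_lt_deriv_boundary'
    (fun x hx => (hu x hx.1).continuousAt.continuousWithinAt)
    (fun x hx => (hu x hx.1).hasDerivWithinAt) hinit
    (fun x hx => (hasDerivAt_const_div_log (ht0.trans_le hx.1)).continuousAt.continuousWithinAt)
    (fun x hx => (hasDerivAt_const_div_log (ht0.trans_le hx.1)).hasDerivWithinAt) hcross
    ⟨ht, le_rfl⟩

theorem tendsto_zero_of_tendsto_sq {α : Type*} {l : Filter α} {f : α → ℝ}
    (hf : Tendsto (fun x => f x ^ 2) l (𝓝 0)) : Tendsto f l (𝓝 0) := by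
  rw [tendsto_zero_iff_abs_tendsto_zero]
  simpa [Function.comp_def, sqrt_sq_eq_abs] using hf.sqrt

section Profile

variable {V1 V2 K1 K2 : ℝ → ℝ} {t : ℝ}

theorem hasDerivAt_sq_sub_sq
    (h1 : HasDerivAt V1 (-1 / (2 * t) * V1 t * V2 t ^ 2 + K1 t) t)
    (h2 : HasDerivAt V2 (-1 / (2 * t) * V1 t ^ 2 * V2 t + K2 t) t) :
    HasDerivAt (fun s => V1 s ^ 2 - V2 s ^ 2) (2 * (V1 t * K1 t - V2 t * K2 t)) t :=
  ((h1.pow 2).sub (h2.pow 2)).congr_deriv (by ring)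

theorem abs_deriv_sq_sub_sq_le {A M q : ℝ} (hM : 0 ≤ M) (hV1 : |V1 t| ≤ M) (hV2 : |V2 t| ≤ M)
    (hK1 : |K1 t| ≤ A * t ^ q) (hK2 : |K2 t| ≤ A * t ^ q) :
    |2 * (V1 t * K1 t - V2 t * K2 t)| ≤ 4 * M * A * t ^ q := by
  have h1 : |V1 t * K1 t| ≤ M * (A * t ^ q) := by
    rw [abs_mul]; exact mul_le_mul hV1 hK1 (abs_nonneg _) hM
  have h2 : |V2 t * K2 t| ≤ M * (A * t ^ q) := by
    rw [abs_mul]; exact mul_le_mul hV2 hK2 (abs_nonneg _) hM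
  rw [abs_mul, abs_two]
  linarith [abs_sub (V1 t * K1 t) (V2 t * K2 t)]

theorem hasDerivAt_sq_fst (h1 : HasDerivAt V1 (-1 / (2 * t) * V1 t * V2 t ^ 2 + K1 t) t) :
    HasDerivAt (fun s => V1 s ^ 2) (-(V1 t ^ 2 * V2 t ^ 2) / t + 2 * (V1 t * K1 t)) t :=
  (h1.pow 2).congr_deriv (by field_simp; ring)

theorem deriv_sq_fst_le {A M c q : ℝ} (ht : 0 < t) (hM : 0 ≤ M)
    (hV1 : |V1 t| ≤ M) (hK1 : |K1 t| ≤ A * t ^ q)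
    (hmass : |V1 t ^ 2 - V2 t ^ 2| ≤ c * t ^ (q + 1)) :
    -(V1 t ^ 2 * V2 t ^ 2) / t + 2 * (V1 t * K1 t) ≤
      -(V1 t ^ 2) ^ 2 / t + (M ^ 2 * c + 2 * (M * A)) * t ^ q := by
  have hsq : V1 t ^ 2 ≤ M ^ 2 := sq_le_sq' (abs_le.1 hV1).1 (abs_le.1 hV1).2
  have hdiff : V1 t ^ 2 * (V1 t ^ 2 - V2 t ^ 2) ≤ M ^ 2 * (c * t ^ (q + 1)) :=
    (le_abs_self _).trans (by rw [abs_mul, abs_of_nonneg (sq_nonneg _)]; gcongr)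
  have hforce : V1 t * K1 t ≤ M * (A * t ^ q) :=
    (le_abs_self _).trans (by rw [abs_mul]; exact mul_le_mul hV1 hK1 (abs_nonneg _) hM)
  rw [rpow_add_one ht.ne'] at hdiff
  calc -(V1 t ^ 2 * V2 t ^ 2) / t + 2 * (V1 t * K1 t)
      = -(V1 t ^ 2) ^ 2 / t + V1 t ^ 2 * (V1 t ^ 2 - V2 t ^ 2) / t + 2 * (V1 t * K1 t) := by ring
    _ ≤ -(V1 t ^ 2) ^ 2 / t + M ^ 2 * (c * (t ^ q * t)) / t + 2 * (M * (A * t ^ q)) := by gcongr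
    _ = _ := by field_simp; ring

end Profile

theorem profile_zero_mass_decay_general
    (t0 μ A M : ℝ) (ht0 : 2 ≤ t0) (hμ' : μ < 1/10) (hA : 0 ≤ A) (hM : 0 ≤ M)
    (V1 V2 K1 K2 : ℝ → ℝ)
    (hK1 : ∀ t, t0 ≤ t → |K1 t| ≤ A * t ^ (2*μ - 3/2))
    (hK2 : ∀ t, t0 ≤ t → |K2 t| ≤ A * t ^ (2*μ - 3/2))
    (hV : ∀ t, t0 ≤ t → Real.sqrt ((V1 t)^2 + (V2 t)^2) ≤ M)
    (hode1 : ∀ t, t0 ≤ t → HasDerivAt V1 (-1 / (2*t) * V1 t * (V2 t)^2 + K1 t) t)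
    (hode2 : ∀ t, t0 ≤ t → HasDerivAt V2 (-1 / (2*t) * (V1 t)^2 * V2 t + K2 t) t)
    (hm : Filter.Tendsto (fun t => (V1 t)^2 - (V2 t)^2) Filter.atTop (nhds 0)) :
    Filter.Tendsto V1 Filter.atTop (nhds 0) ∧
    Filter.Tendsto V2 Filter.atTop (nhds 0) ∧
    ∃ C : ℝ, ∀ t, t0 ≤ t → |V1 t| ≤ C / Real.sqrt (Real.log t) := by
  have hq : 2 * μ - 3 / 2 < -1 := by linarith
  have hV1 : ∀ t ≥ t0, |V1 t| ≤ M := fun t ht =>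
    (abs_le_sqrt (le_add_of_nonneg_right (sq_nonneg _))).trans (hV t ht)
  have hV2 : ∀ t ≥ t0, |V2 t| ≤ M := fun t ht =>
    (abs_le_sqrt (le_add_of_nonneg_left (sq_nonneg _))).trans (hV t ht)
  have hmass : ∀ t ≥ t0, |V1 t ^ 2 - V2 t ^ 2| ≤
      4 * M * A / -(2 * μ - 3 / 2 + 1) * t ^ (2 * μ - 3 / 2 + 1) := fun t ht =>
    abs_le_rpow_of_abs_deriv_le (by linarith) hq
      (fun s hs => hasDerivAt_sq_sub_sq (hode1 s hs) (hode2 s hs))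
      (fun s hs => abs_deriv_sq_sub_sq_le hM (hV1 s hs) (hV2 s hs) (hK1 s hs) (hK2 s hs)) hm ht
  have hc : 0 ≤ 4 * M * A / -(2 * μ - 3 / 2 + 1) := div_nonneg (by positivity) (by linarith)
  obtain ⟨b, hb⟩ := exists_le_div_log_of_deriv_le (u := fun t => V1 t ^ 2) (by linarith) hq
    (by positivity) (fun t ht => hasDerivAt_sq_fst (hode1 t ht))
    (fun t ht => deriv_sq_fst_le (by linarith) hM (hV1 t ht) (hK1 t ht) (hmass t ht))
  have hV1sq : Tendsto (fun t => V1 t ^ 2) atTop (𝓝 0) :=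
    squeeze_zero' (.of_forall fun _ => sq_nonneg _) ((eventually_ge_atTop t0).mono hb)
      (tendsto_const_nhds.div_atTop tendsto_log_atTop)
  have hV2sq : Tendsto (fun t => V2 t ^ 2) atTop (𝓝 0) := by simpa using hV1sq.sub hm
  refine ⟨tendsto_zero_of_tendsto_sq hV1sq, tendsto_zero_of_tendsto_sq hV2sq, √b, fun t ht => ?_⟩
  rw [← sqrt_sq_eq_abs, ← sqrt_div' _ (log_nonneg (by linarith))]
  exact sqrt_le_sqrt (hb t ht)

theorem profile_zero_mass_decay
    (t0 μ A M : ℝ) (ht0 : 2 ≤ t0) (hμ : 0 < μ) (hμ' : μ < 1/10) (hA : 0 ≤ A) (hM : 0 ≤ M)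
    (V1 V2 K1 K2 : ℝ → ℝ)
    (hK1C : ContinuousOn K1 (Ici t0)) (hK2C : ContinuousOn K2 (Ici t0))
    (hK1 : ∀ t, t0 ≤ t → |K1 t| ≤ A * t ^ (2*μ - 3/2))
    (hK2 : ∀ t, t0 ≤ t → |K2 t| ≤ A * t ^ (2*μ - 3/2))
    (hV : ∀ t, t0 ≤ t → Real.sqrt ((V1 t)^2 + (V2 t)^2) ≤ M)
    (hode1 : ∀ t, t0 ≤ t → HasDerivAt V1 (-1 / (2*t) * V1 t * (V2 t)^2 + K1 t) t)
    (hode2 : ∀ t, t0 ≤ t → HasDerivAt V2 (-1 / (2*t) * (V1 t)^2 * V2 t + K2 t) t)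
    (hm : Filter.Tendsto (fun t => (V1 t)^2 - (V2 t)^2) Filter.atTop (nhds 0)) :
    Filter.Tendsto V1 Filter.atTop (nhds 0) ∧
    Filter.Tendsto V2 Filter.atTop (nhds 0) ∧
    ∃ C : ℝ, ∀ t, t0 ≤ t → |V1 t| ≤ C / Real.sqrt (Real.log t) :=
  profile_zero_mass_decay_general t0 μ A M ht0 hμ' hA hM V1 V2 K1 K2 hK1 hK2 hV hode1 hode2 hm
end
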